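/- For a third-order tensor A ∈ ℂ^{n1×n2×n3}, the block-circulant matrix bcirc(A) is block-diagonalized by the Kronecker DFT: (F_{n3} ⊗ I_{n1}) · bcirc(A) · (F_{n3}^{-1} ⊗ I_{n2}) = bdiag(Â), where Â is the tensor obtained by applying the DFT along the third dimension of A and bdiag(Â) is the block-diagonal matrix with diagonal blocks the frontal slices of Â. -/

import Mathlib

open Matrix Real Kronecker

/-- A third-order complex tensor represented by its frontal slices. -/
abbrev TensorC (n1 n2 n3 : ℕ) := Fin n3 → Matrix (Fin n1) (Fin n2) ℂ

noncomputable def dftMatrix (n : ℕ) : Matrix (Fin n) (Fin n) ℂ :=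
  fun j k => (Complex.exp (-2 * Real.pi * Complex.I / n)) ^ (j.val * k.val)

/-- Block-circulant matrix of a third-order tensor. -/
def bcirc {n1 n2 n3 : ℕ} (A : TensorC n1 n2 n3) :
    Matrix (Fin n3 × Fin n1) (Fin n3 × Fin n2) ℂ :=
  fun p q => A (p.1 - q.1) p.2 q.2

/-- DFT of the tensor along the third dimension: slice k is Σ_j ω^{jk} A^{(j)}. -/
noncomputable def dftSlices {n1 n2 n3 : ℕ} (A : TensorC n1 n2 n3) : TensorC n1 n2 n3 :=
  fun k => ∑ j : Fin n3,
    ((Complex.exp (-2 * Real.pi * Complex.I / n3)) ^ (j.val * k.val)) • A j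

/-- Block-diagonal matrix whose diagonal blocks are the frontal slices of a tensor. -/
def bdiag {n1 n2 n3 : ℕ} (A : TensorC n1 n2 n3) :
    Matrix (Fin n3 × Fin n1) (Fin n3 × Fin n2) ℂ :=
  fun p q => if p.1 = q.1 then A p.1 p.2 q.2 else 0

/-! The identity is equivalent to `(F ⊗ I) · bcirc A = bdiag Â · (F ⊗ I)`. Entry `((k,i),(l,i'))`
of either side is `Σ_j ω^{kj} A^{(j-l)}_{ii'}`: on the right this appears after substituting
`j ↦ j + l`, because `ω^{k(j+l)} = ω^{kj} ω^{kl}` holds for indices added mod `n` as `ω^n = 1`.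
`F` is invertible since `F(ω) · F(ω⁻¹) = n · I` by the orthogonality of the powers of a primitive
root of unity. -/

section RootsOfUnity

variable {K : Type*} [Field K]

def powMatrix (ζ : K) (n : ℕ) : Matrix (Fin n) (Fin n) K :=
  of fun j k => ζ ^ (j.val * k.val)

theorem Fin.sum_pow_val_eq_zero {x : K} {n : ℕ} (hx : x ≠ 1) (hxn : x ^ n = 1) :
    ∑ a : Fin n, x ^ a.val = 0 := by
  rw [Fin.sum_univ_eq_sum_range (x ^ ·), geom_sum_eq hx, hxn, sub_self, zero_div]

theorem IsPrimitiveRoot.powMatrix_mul_powMatrix_inv {ζ : K} {n : ℕ} (hζ : IsPrimitiveRoot ζ n) :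
    powMatrix ζ n * powMatrix ζ⁻¹ n = (n : K) • 1 := by
  ext j k
  have hζ0 : ζ ≠ 0 := hζ.ne_zero j.pos.ne'
  set x := ζ ^ j.val * (ζ ^ k.val)⁻¹
  have hterm (a : Fin n) : ζ ^ (j.val * a.val) * ζ⁻¹ ^ (a.val * k.val) = x ^ a.val := by
    ring
  simp only [mul_apply, powMatrix, of_apply, hterm, Matrix.smul_apply, one_apply]
  by_cases hjk : j = k
  · simp [x, hjk, hζ0]
  · have hx : x ≠ 1 := fun h => hjk <| Fin.ext <|
      hζ.pow_inj j.isLt k.isLt ((mul_inv_eq_one₀ (pow_ne_zero _ hζ0)).mp h)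
    have hpow (m : ℕ) : (ζ ^ m) ^ n = 1 := by rw [pow_right_comm, hζ.pow_eq_one, one_pow]
    have hxn : x ^ n = 1 := by rw [mul_pow, inv_pow, hpow, hpow, inv_one, mul_one]
    simp [Fin.sum_pow_val_eq_zero hx hxn, hjk]

end RootsOfUnity

theorem Fin.pow_val_add_of_pow_eq_one {M : Type*} [Monoid M] {x : M} {n : ℕ} (hx : x ^ n = 1)
    (a b : Fin n) :
    x ^ (a + b).val = x ^ a.val * x ^ b.val := by
  rw [Fin.val_add, ← pow_eq_pow_mod _ hx, pow_add]

theorem Complex.isPrimitiveRoot_exp_neg (n : ℕ) (hn : n ≠ 0) :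
    IsPrimitiveRoot (Complex.exp (-2 * π * Complex.I / n)) n := by
  have := (Complex.isPrimitiveRoot_exp n hn).inv
  rwa [← Complex.exp_neg, ← neg_div, ← neg_mul, ← neg_mul] at this

theorem Complex.exp_neg_two_pi_I_div_pow_self (n : ℕ) :
    Complex.exp (-2 * π * Complex.I / n) ^ n = 1 := by
  rcases eq_or_ne n 0 with rfl | hn
  · exact pow_zero _
  · exact (Complex.isPrimitiveRoot_exp_neg n hn).pow_eq_one

theorem dftMatrix_mul_inv (n : ℕ) : dftMatrix n * (dftMatrix n)⁻¹ = 1 := by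
  rcases eq_or_ne n 0 with rfl | hn
  · exact Subsingleton.elim _ _
  have hF : dftMatrix n * ((n : ℂ)⁻¹ • powMatrix (Complex.exp (-2 * π * Complex.I / n))⁻¹ n) =
      1 := by
    rw [mul_smul_comm, show dftMatrix n = powMatrix _ n from rfl,
      (Complex.isPrimitiveRoot_exp_neg n hn).powMatrix_mul_powMatrix_inv, smul_smul,
      inv_mul_cancel₀ (Nat.cast_ne_zero.mpr hn), one_smul]
  rw [inv_eq_right_inv hF, hF]

theorem dftMatrix_kronecker_one_mul_bcirc {n1 n2 n3 : ℕ} (A : TensorC n1 n2 n3) :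
    (dftMatrix n3 ⊗ₖ (1 : Matrix (Fin n1) (Fin n1) ℂ)) * bcirc A =
      bdiag (dftSlices A) * (dftMatrix n3 ⊗ₖ (1 : Matrix (Fin n2) (Fin n2) ℂ)) := by
  set ω := Complex.exp (-2 * π * Complex.I / n3)
  have hω (k : ℕ) : (ω ^ k) ^ n3 = 1 := by
    rw [pow_right_comm, Complex.exp_neg_two_pi_I_div_pow_self, one_pow]
  ext ⟨k, i⟩ ⟨l, i'⟩
  have : NeZero n3 := ⟨k.pos.ne'⟩
  simp only [mul_apply, Fintype.sum_prod_type, kroneckerMap_apply, bcirc, bdiag, dftSlices,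
    dftMatrix, one_apply, Matrix.sum_apply, Matrix.smul_apply, smul_eq_mul, mul_ite, ite_mul,
    mul_one, mul_zero, zero_mul, Finset.sum_ite_eq, Finset.sum_ite_eq', Finset.mem_univ, if_true,
    Finset.sum_mul]
  refine Fintype.sum_equiv (Equiv.subRight l) _ _ fun j => ?_
  rw [Equiv.subRight_apply, pow_mul, ← sub_add_cancel j l, Fin.pow_val_add_of_pow_eq_one (hω k),
    sub_add_cancel]
  ring

theorem bcirc_block_diagonalization {n1 n2 n3 : ℕ} (A : TensorC n1 n2 n3) :
    (dftMatrix n3 ⊗ₖ (1 : Matrix (Fin n1) (Fin n1) ℂ)) * bcirc A *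
        ((dftMatrix n3)⁻¹ ⊗ₖ (1 : Matrix (Fin n2) (Fin n2) ℂ)) =
      bdiag (dftSlices A) := by
  rw [dftMatrix_kronecker_one_mul_bcirc, Matrix.mul_assoc, ← mul_kronecker_mul,
    dftMatrix_mul_inv, Matrix.one_mul, one_kronecker_one, Matrix.mul_one]
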